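/- arXiv:2407.18228 — 2 statements merged into one kernel-verified Lean document; each statement's English description precedes it below -/
import Mathlib

section
/- Let A ⊆ ℤ be finite, let s ≥ 2 be an integer, let q > max(sA - sA) be an integer, and let λ, m be positive integers. Suppose m does not divide φ_λ(c) for any nonzero c ∈ sA - sA, where φ_λ(a) = (λ·a mod q) viewed as an integer in [0, q-1]. Let A' ⊆ A be a subset such that the image φ_λ(A') has diameter at most q/s. Then the map ψ(x) = φ_λ(x) mod m is a Freiman s-isomorphism from A' onto ψ(A'). -/
open Finset Pointwise

private lemma msum_mem_nsmul {A : Finset ℤ} :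
    ∀ (t : Multiset ℤ), (∀ x ∈ t, x ∈ A) → t.sum ∈ (Multiset.card t) • A := by
  intro t
  induction t using Multiset.induction_on with
  | empty =>
      intro _
      simp only [Multiset.sum_zero, Multiset.card_zero, zero_nsmul]
      exact Finset.zero_mem_zero
  | cons a t ih =>
      intro h
      simp only [Multiset.sum_cons, Multiset.card_cons, succ_nsmul']
      exact Finset.add_mem_add (h _ (Multiset.mem_cons_self _ _))
        (ih fun x hx => h x (Multiset.mem_cons_of_mem hx))

private lemma msum_modeq {q : ℤ} {f g : ℤ → ℤ} :
    ∀ (t : Multiset ℤ), (∀ x ∈ t, f x ≡ g x [ZMOD q]) →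
      (t.map f).sum ≡ (t.map g).sum [ZMOD q] := by
  intro t
  induction t using Multiset.induction_on with
  | empty =>
      intro _
      simp only [Multiset.map_zero, Multiset.sum_zero]
      exact Int.ModEq.refl 0
  | cons a t ih =>
      intro h
      simp only [Multiset.map_cons, Multiset.sum_cons]
      exact (h _ (Multiset.mem_cons_self _ _)).add
        (ih fun x hx => h x (Multiset.mem_cons_of_mem hx))

private lemma msum_sub (f g : ℤ → ℤ) :
    ∀ (t : Multiset ℤ),
      (t.map (fun x => f x - g x)).sum = (t.map f).sum - (t.map g).sum := by
  intro t
  induction t using Multiset.induction_on with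
  | empty => simp
  | cons a t ih =>
      simp only [Multiset.map_cons, Multiset.sum_cons, ih]
      ring

/-- Constructive Ruzsa modeling lemma, isomorphism step: if `m` does not divide
`φ_λ(c) = (λ·c mod q)` for any nonzero `c ∈ sA - sA`, and `A' ⊆ A` has
`diam(φ_λ(A')) ≤ q/s`, then `ψ(x) = φ_λ(x) mod m` is a Freiman `s`-isomorphism from `A'`
onto `ψ(A')`. -/
theorem stmt_7 (A : Finset ℤ) (s : ℕ) (hs : 2 ≤ s) (q : ℤ)
    (hq : ∀ c ∈ s • A - s • A, c < q)
    (lam : ℤ) (hlam : 0 < lam) (m : ℕ) (hm : 0 < m)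
    (hdvd : ∀ c ∈ s • A - s • A, c ≠ 0 → ¬ ((m : ℤ) ∣ (lam * c) % q))
    (A' : Finset ℤ) (hA'A : A' ⊆ A)
    (hdiam : ∀ a ∈ A', ∀ b ∈ A', (s : ℤ) * ((lam * a) % q - (lam * b) % q) ≤ q) :
    IsAddFreimanIso s (A' : Set ℤ)
      ((fun x : ℤ => (((lam * x) % q : ℤ) : ZMod m)) '' (A' : Set ℤ))
      (fun x : ℤ => (((lam * x) % q : ℤ) : ZMod m)) := by
  classical
  set φ : ℤ → ℤ := fun x => (lam * x) % q with hφdef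
  rcases A'.eq_empty_or_nonempty with h | hne
  · rw [h]
    simp only [Finset.coe_empty, Set.image_empty]
    exact isAddFreimanIso_empty
  -- basic facts
  have hs0 : (0 : ℤ) < (s : ℤ) := by exact_mod_cast Nat.lt_of_lt_of_le Nat.zero_lt_two hs
  have hAne : A.Nonempty := ⟨hne.choose, hA'A hne.choose_spec⟩
  have hq0 : 0 < q := by
    obtain ⟨a, ha⟩ := hAne
    have h1 : (s : ℕ) • a ∈ s • A := Finset.nsmul_mem_nsmul ha
    have h0 : (0 : ℤ) ∈ s • A - s • A := by
      have := Finset.sub_mem_sub h1 h1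
      simpa using this
    exact hq 0 h0
  have hphim : ∀ x : ℤ, φ x ≡ lam * x [ZMOD q] :=
    fun x => Int.emod_emod_of_dvd _ dvd_rfl
  have hphi0 : ∀ x : ℤ, 0 ≤ φ x := fun x => Int.emod_nonneg _ (ne_of_gt hq0)
  have hphiq : ∀ x : ℤ, φ x < q := fun x => Int.emod_lt_of_pos _ hq0
  have hzero : ∀ c ∈ s • A - s • A, (lam * c) % q = 0 → c = 0 := by
    intro c hc h0
    by_contra hc0
    exact hdvd c hc hc0 (h0 ▸ dvd_zero _)
  have hsym : ∀ c ∈ s • A - s • A, -c ∈ s • A - s • A := by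
    intro c hc
    rw [Finset.mem_sub] at hc ⊢
    obtain ⟨x, hx, y, hy, hxy⟩ := hc
    exact ⟨y, hy, x, hx, by omega⟩
  have hsubAA : ∀ a ∈ A, ∀ b ∈ A, a - b ∈ s • A - s • A := by
    intro a ha b hb
    have h1 : (a ::ₘ Multiset.replicate (s - 1) b).sum ∈
        (Multiset.card (a ::ₘ Multiset.replicate (s - 1) b)) • A := by
      apply msum_mem_nsmul
      intro x hx
      rcases Multiset.mem_cons.1 hx with rfl | hx
      · exact ha
      · rwa [(Multiset.eq_of_mem_replicate hx)]
    have hcard : Multiset.card (a ::ₘ Multiset.replicate (s - 1) b) = s := by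
      simp [Multiset.card_cons, Multiset.card_replicate]
      omega
    rw [hcard] at h1
    have h2 : (s : ℕ) • b ∈ s • A := Finset.nsmul_mem_nsmul hb
    have h3 := Finset.sub_mem_sub h1 h2
    have h4 : (a ::ₘ Multiset.replicate (s - 1) b).sum - (s : ℕ) • b = a - b := by
      rw [Multiset.sum_cons, Multiset.sum_replicate]
      have h5 : ((s - 1 : ℕ) : ℤ) = (s : ℤ) - 1 := by
        push_cast [Nat.cast_sub (by omega : 1 ≤ s)]
        ring
      simp only [nsmul_eq_mul, h5]
      ring
    rwa [h4] at h3
  -- key divisibility lemma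
  have key' : ∀ c ∈ s • A - s • A, ∀ D : ℤ, 0 ≤ D → D < q →
      D ≡ lam * c [ZMOD q] → (m : ℤ) ∣ D → c = 0 := by
    intro c hc D hD0 hDq hcong hdvdD
    by_contra hc0
    have h1 : (lam * c) % q = D := by
      have h2 : D % q = (lam * c) % q := hcong
      rw [Int.emod_eq_of_lt hD0 hDq] at h2
      exact h2.symm
    exact hdvd c hc hc0 (h1 ▸ hdvdD)
  have key : ∀ c ∈ s • A - s • A, ∀ D : ℤ, -q < D → D < q →
      D ≡ lam * c [ZMOD q] → (m : ℤ) ∣ D → c = 0 := by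
    intro c hc D hD1 hD2 hcong hdvdD
    rcases le_or_gt 0 D with hD0 | hD0
    · exact key' c hc D hD0 hD2 hcong hdvdD
    · have h1 : (-D) ≡ lam * (-c) [ZMOD q] := by
        have := hcong.neg
        simpa [mul_neg] using this
      have := key' (-c) (hsym c hc) (-D) (by omega) (by omega) h1 hdvdD.neg_right
      omega
  -- minimum of φ on A'
  obtain ⟨a₀, ha₀A', ha₀min⟩ := Finset.exists_min_image A' φ hne
  -- the master lemma
  have L1 : ∀ (t : Multiset ℤ), (∀ x ∈ t, x ∈ (A' : Set ℤ)) → Multiset.card t = s →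
      (t.map φ).sum - (s : ℤ) * φ a₀ = (lam * (t.sum - (s : ℤ) * a₀)) % q := by
    intro t htA htc
    have htA' : ∀ x ∈ t, x ∈ A' := fun x hx => htA x hx
    -- membership
    have htsum : t.sum ∈ s • A := by
      have := msum_mem_nsmul t (fun x hx => hA'A (htA' x hx))
      rwa [htc] at this
    have ha₀s : (s : ℤ) * a₀ ∈ s • A := by
      have := Finset.nsmul_mem_nsmul (hA'A ha₀A') (n := s)
      simpa [nsmul_eq_mul] using this
    have hu : t.sum - (s : ℤ) * a₀ ∈ s • A - s • A := Finset.sub_mem_sub htsum ha₀s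
    -- congruence
    have h1 : (t.map φ).sum ≡ (t.map (fun x => lam * x)).sum [ZMOD q] :=
      msum_modeq t (fun x _ => hphim x)
    have h2 : (t.map fun x => lam * x).sum = lam * t.sum := by
      have := Multiset.sum_map_mul_left (s := t) (f := fun x => x) (a := lam)
      simpa using this
    have h3 : (s : ℤ) * φ a₀ ≡ (s : ℤ) * (lam * a₀) [ZMOD q] := (hphim a₀).mul_left _
    have hcong : (t.map φ).sum - (s : ℤ) * φ a₀ ≡
        lam * (t.sum - (s : ℤ) * a₀) [ZMOD q] := by
      have h4 := h1.sub h3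
      rw [h2] at h4
      have h5 : lam * t.sum - (s : ℤ) * (lam * a₀) = lam * (t.sum - (s : ℤ) * a₀) := by ring
      rwa [h5] at h4
    -- lower bound
    have hconst : (t.map (fun _ : ℤ => φ a₀)).sum = (s : ℤ) * φ a₀ := by
      rw [Multiset.map_const', Multiset.sum_replicate, htc, nsmul_eq_mul]
    have hS0 : 0 ≤ (t.map φ).sum - (s : ℤ) * φ a₀ := by
      have hle : (t.map (fun _ : ℤ => φ a₀)).sum ≤ (t.map φ).sum :=
        Multiset.sum_map_le_sum_map _ _ (fun x hx => ha₀min x (htA' x hx))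
      rw [hconst] at hle
      linarith
    -- upper bound
    have hsumfact : (t.map (fun x => (s : ℤ) * (φ x - φ a₀))).sum =
        (s : ℤ) * ((t.map φ).sum - (s : ℤ) * φ a₀) := by
      have h6 := Multiset.sum_map_mul_left (s := t) (f := fun x => φ x - φ a₀) (a := (s : ℤ))
      rw [h6, msum_sub, hconst]
    have hSq : (t.map φ).sum - (s : ℤ) * φ a₀ ≤ q := by
      have h7 : (t.map (fun x => (s : ℤ) * (φ x - φ a₀))).sum ≤
          (Multiset.card (t.map (fun x => (s : ℤ) * (φ x - φ a₀)))) • q := by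
        apply Multiset.sum_le_card_nsmul
        intro x hx
        obtain ⟨y, hy, rfl⟩ := Multiset.mem_map.1 hx
        exact hdiam y (htA' y hy) a₀ ha₀A'
      rw [Multiset.card_map, htc, nsmul_eq_mul, hsumfact] at h7
      exact le_of_mul_le_mul_left h7 hs0
    rcases lt_or_eq_of_le hSq with hlt | heqq
    · have h8 : ((t.map φ).sum - (s : ℤ) * φ a₀) % q =
          (lam * (t.sum - (s : ℤ) * a₀)) % q := hcong
      rwa [Int.emod_eq_of_lt hS0 hlt] at h8
    · exfalso
      -- S = q ; first u = 0
      have hu0 : t.sum - (s : ℤ) * a₀ = 0 := by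
        apply hzero _ hu
        have h8 : ((t.map φ).sum - (s : ℤ) * φ a₀) % q =
            (lam * (t.sum - (s : ℤ) * a₀)) % q := hcong
        rw [heqq, Int.emod_self] at h8
        omega
      -- each term equals q
      have heach : ∀ x ∈ t, (s : ℤ) * (φ x - φ a₀) = q := by
        intro x hx
        obtain ⟨t', rfl⟩ := Multiset.exists_cons_of_mem hx
        have hcard' : (Multiset.card t' : ℤ) = (s : ℤ) - 1 := by
          have := htc
          simp only [Multiset.card_cons] at this
          push_cast [← this]
          ring
        have hsplit : (s : ℤ) * (φ x - φ a₀) +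
            (t'.map (fun y => (s : ℤ) * (φ y - φ a₀))).sum = (s : ℤ) * q := by
          have := hsumfact
          rw [heqq] at this
          simpa [Multiset.map_cons, Multiset.sum_cons] using this
        have hle' : (t'.map (fun y => (s : ℤ) * (φ y - φ a₀))).sum ≤
            ((s : ℤ) - 1) * q := by
          have h9 : (t'.map (fun y => (s : ℤ) * (φ y - φ a₀))).sum ≤
              (Multiset.card (t'.map (fun y => (s : ℤ) * (φ y - φ a₀)))) • q := by
            apply Multiset.sum_le_card_nsmul
            intro z hz
            obtain ⟨y, hy, rfl⟩ := Multiset.mem_map.1 hz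
            exact hdiam y (htA' y (Multiset.mem_cons_of_mem hy)) a₀ ha₀A'
          rwa [Multiset.card_map, nsmul_eq_mul, hcard'] at h9
        have hub := hdiam x (htA' x hx) a₀ ha₀A'
        nlinarith
      -- all elements equal
      have hallx : ∀ x ∈ t, ∀ y ∈ t, x = y := by
        intro x hx y hy
        have h1' := heach x hx
        have h2' := heach y hy
        have hxy : φ x = φ y := by
          have h3' : (s : ℤ) * (φ x - φ a₀) = (s : ℤ) * (φ y - φ a₀) := by omega
          have := mul_left_cancel₀ (ne_of_gt hs0) h3'
          omega
        have hcongxy : (lam * (x - y)) % q = 0 := by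
          have h4' : lam * x - lam * y ≡ φ x - φ y [ZMOD q] :=
            (hphim x).symm.sub (hphim y).symm
          rw [hxy, sub_self] at h4'
          have h5' : lam * (x - y) ≡ 0 [ZMOD q] := by
            have : lam * (x - y) = lam * x - lam * y := by ring
            rwa [this]
          have h6' : lam * (x - y) % q = 0 % q := h5'
          rwa [Int.zero_emod] at h6'
        have := hzero (x - y)
          (hsubAA x (hA'A (htA' x hx)) y (hA'A (htA' y hy))) hcongxy
        omega
      have htne : t ≠ 0 := by
        intro h0
        rw [h0] at htc
        simp at htc
        omega
      obtain ⟨x₀, hx₀⟩ := Multiset.exists_mem_of_ne_zero htne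
      have ht_rep : t = Multiset.replicate s x₀ :=
        Multiset.eq_replicate.2 ⟨htc, fun b hb => hallx b hb x₀ hx₀⟩
      have hsum_rep : t.sum = (s : ℤ) * x₀ := by
        rw [ht_rep, Multiset.sum_replicate, nsmul_eq_mul]
      have hx₀a₀ : x₀ = a₀ := by
        rw [hsum_rep] at hu0
        have : (s : ℤ) * (x₀ - a₀) = 0 := by ring_nf; ring_nf at hu0; omega
        rcases mul_eq_zero.1 this with h | h
        · omega
        · omega
      have := heach x₀ hx₀
      rw [hx₀a₀, sub_self, mul_zero] at this
      omega
  -- cast lemma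
  have hcast : ∀ t : Multiset ℤ,
      (t.map (fun x => ((φ x : ℤ) : ZMod m))).sum = (((t.map φ).sum : ℤ) : ZMod m) := by
    intro t
    induction t using Multiset.induction_on with
    | empty => simp
    | cons a t ih =>
        simp only [Multiset.map_cons, Multiset.sum_cons, ih]
        exact (Int.cast_add _ _).symm
  constructor
  · -- BijOn
    refine ⟨fun x hx => Set.mem_image_of_mem _ hx, ?_, Set.surjOn_image _ _⟩
    intro a ha b hb hab
    have ha' : a ∈ A' := ha
    have hb' : b ∈ A' := hb
    have hmodeq : φ a ≡ φ b [ZMOD (m : ℤ)] := by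
      have hab' : ((φ a : ℤ) : ZMod m) = ((φ b : ℤ) : ZMod m) := hab
      exact (ZMod.intCast_eq_intCast_iff _ _ _).1 hab'
    have hdvdD : (m : ℤ) ∣ φ a - φ b := (Int.ModEq.dvd hmodeq.symm)
    have hcong : φ a - φ b ≡ lam * (a - b) [ZMOD q] := by
      have h1 : φ a - φ b ≡ lam * a - lam * b [ZMOD q] := (hphim a).sub (hphim b)
      have h2 : lam * a - lam * b = lam * (a - b) := by ring
      rwa [h2] at h1
    have h3 := key (a - b) (hsubAA a (hA'A ha') b (hA'A hb')) (φ a - φ b)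
      (by have := hphi0 a; have := hphiq b; omega)
      (by have := hphiq a; have := hphi0 b; omega) hcong hdvdD
    omega
  · -- multiset sum condition
    intro t₁ t₂ h₁A h₂A hc₁ hc₂
    have hL₁ := L1 t₁ (fun x hx => h₁A hx) hc₁
    have hL₂ := L1 t₂ (fun x hx => h₂A hx) hc₂
    have ht₁sum : t₁.sum ∈ s • A := by
      have := msum_mem_nsmul t₁ (fun x hx => hA'A (h₁A hx))
      rwa [hc₁] at this
    have ht₂sum : t₂.sum ∈ s • A := by
      have := msum_mem_nsmul t₂ (fun x hx => hA'A (h₂A hx))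
      rwa [hc₂] at this
    constructor
    · intro hψ
      rw [hcast t₁, hcast t₂, ZMod.intCast_eq_intCast_iff] at hψ
      have hdvdD : (m : ℤ) ∣ (t₁.map φ).sum - (t₂.map φ).sum := Int.ModEq.dvd hψ.symm
      have hcmem : t₁.sum - t₂.sum ∈ s • A - s • A := Finset.sub_mem_sub ht₁sum ht₂sum
      have hr₁0 : 0 ≤ (lam * (t₁.sum - (s : ℤ) * a₀)) % q := Int.emod_nonneg _ (ne_of_gt hq0)
      have hr₁q : (lam * (t₁.sum - (s : ℤ) * a₀)) % q < q := Int.emod_lt_of_pos _ hq0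
      have hr₂0 : 0 ≤ (lam * (t₂.sum - (s : ℤ) * a₀)) % q := Int.emod_nonneg _ (ne_of_gt hq0)
      have hr₂q : (lam * (t₂.sum - (s : ℤ) * a₀)) % q < q := Int.emod_lt_of_pos _ hq0
      have hcong : (t₁.map φ).sum - (t₂.map φ).sum ≡
          lam * (t₁.sum - t₂.sum) [ZMOD q] := by
        have h1 : (t₁.map φ).sum - (s : ℤ) * φ a₀ ≡
            lam * (t₁.sum - (s : ℤ) * a₀) [ZMOD q] := by
          rw [hL₁]
          exact (Int.emod_emod_of_dvd _ dvd_rfl)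
        have h2 : (t₂.map φ).sum - (s : ℤ) * φ a₀ ≡
            lam * (t₂.sum - (s : ℤ) * a₀) [ZMOD q] := by
          rw [hL₂]
          exact (Int.emod_emod_of_dvd _ dvd_rfl)
        have h3 := h1.sub h2
        have h4 : (t₁.map φ).sum - (s : ℤ) * φ a₀ - ((t₂.map φ).sum - (s : ℤ) * φ a₀)
            = (t₁.map φ).sum - (t₂.map φ).sum := by ring
        have h5 : lam * (t₁.sum - (s : ℤ) * a₀) - lam * (t₂.sum - (s : ℤ) * a₀)
            = lam * (t₁.sum - t₂.sum) := by ring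
        rwa [h4, h5] at h3
      have h6 := key (t₁.sum - t₂.sum) hcmem ((t₁.map φ).sum - (t₂.map φ).sum)
        (by linarith) (by linarith) hcong hdvdD
      omega
    · intro hsum
      have hφeq : (t₁.map φ).sum = (t₂.map φ).sum := by
        rw [hsum] at hL₁
        linarith
      rw [hcast t₁, hcast t₂, hφeq]
end

section
/- Let A ∈ ℤ^{m×n} with ‖A‖_∞ = Δ, and let b ∈ ℤ^m. If y ∈ ℤ_{≥0}^n is the lexicographically minimal nonnegative integer solution of Ay = b, then |supp(y)| ≤ m·log_2(2nΔ + 1). -/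
open Finset

/-- If `y` is the lexicographically minimal nonnegative integer solution of `Ay = b`, where
`A ∈ ℤ^{m×n}` has entries of absolute value at most `Δ`, then
`|supp(y)| ≤ m·log₂(2nΔ + 1)`. -/
theorem stmt_12 (m n Δ : ℕ) (A : Matrix (Fin m) (Fin n) ℤ)
    (hΔ : ∀ i j, |A i j| ≤ (Δ : ℤ)) (b : Fin m → ℤ) (y : Fin n → ℕ)
    (hy : A.mulVec (fun j => (y j : ℤ)) = b)
    (hmin : ∀ z : Fin n → ℕ, A.mulVec (fun j => (z j : ℤ)) = b → z ≠ y →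
      ∃ k, y k < z k ∧ ∀ i < k, y i = z i) :
    ((Finset.univ.filter fun j => y j ≠ 0).card : ℝ) ≤
      m * Real.logb 2 (2 * n * Δ + 1) := by
  by_contra hcon
  push_neg at hcon
  set S : Finset (Fin n) := Finset.univ.filter fun j => y j ≠ 0 with hS
  -- counting: (2nΔ+1)^m < 2^|S|
  have hpos : (0:ℝ) < 2 * n * Δ + 1 := by positivity
  have hlogb : Real.logb 2 (((2 * n * Δ + 1 : ℝ)) ^ m) = m * Real.logb 2 (2 * n * Δ + 1) := by
    rw [Real.logb_pow]
  have h3 : Real.logb 2 (((2 * n * Δ + 1 : ℝ)) ^ m) < (S.card : ℝ) := by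
    rw [hlogb]; exact hcon
  have hltR : ((2 * n * Δ + 1 : ℝ)) ^ m < (2:ℝ) ^ (S.card : ℕ) := by
    have := (Real.logb_lt_iff_lt_rpow one_lt_two (by positivity)).1 h3
    rwa [Real.rpow_natCast] at this
  have hcount : (2 * n * Δ + 1) ^ m < 2 ^ S.card := by exact_mod_cast hltR
  -- pigeonhole on subsets of S
  have hmaps : ∀ T ∈ S.powerset,
      (A.mulVec (fun j => if j ∈ T then (1:ℤ) else 0)) ∈
        Fintype.piFinset (fun _ : Fin m => Finset.Icc (-(n * Δ : ℤ)) (n * Δ)) := by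
    intro T _
    rw [Fintype.mem_piFinset]
    intro i
    rw [Finset.mem_Icc, ← abs_le]
    calc |A.mulVec (fun j => if j ∈ T then (1:ℤ) else 0) i|
        = |∑ j, A i j * (if j ∈ T then (1:ℤ) else 0)| := by
          simp only [Matrix.mulVec, dotProduct]
      _ ≤ ∑ j, |A i j * (if j ∈ T then (1:ℤ) else 0)| := Finset.abs_sum_le_sum_abs _ _
      _ ≤ ∑ _j : Fin n, (Δ : ℤ) := by
          apply Finset.sum_le_sum
          intro j _
          rw [abs_mul]
          by_cases hj : j ∈ T
          · simpa [hj] using hΔ i j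
          · simp only [hj, if_false, abs_zero, mul_zero]
            positivity
      _ = (n * Δ : ℤ) := by
          rw [Finset.sum_const, Finset.card_univ, Fintype.card_fin, nsmul_eq_mul]
  have hcards : (Fintype.piFinset (fun _ : Fin m => Finset.Icc (-(n * Δ : ℤ)) (n * Δ))).card
      < S.powerset.card := by
    rw [Finset.card_powerset, Fintype.card_piFinset]
    have hIcc : (Finset.Icc (-(n * Δ : ℤ)) (n * Δ)).card = 2 * n * Δ + 1 := by
      rw [Int.card_Icc]
      have : ((n:ℤ) * Δ + 1 - -((n:ℤ) * Δ)) = ((2 * n * Δ + 1 : ℕ) : ℤ) := by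
        push_cast; ring
      rw [this, Int.toNat_natCast]
    simp only [hIcc, Finset.prod_const, Finset.card_univ, Fintype.card_fin]
    exact hcount
  obtain ⟨T, hT, U, hU, hTU, heq⟩ :=
    Finset.exists_ne_map_eq_of_card_lt_of_maps_to hcards hmaps
  rw [Finset.mem_powerset] at hT hU
  -- key construction
  have main : ∀ T U : Finset (Fin n), T ⊆ S → U ⊆ S →
      A.mulVec (fun j => if j ∈ T then (1:ℤ) else 0)
        = A.mulVec (fun j => if j ∈ U then (1:ℤ) else 0) →
      T ≠ U →
      ∃ k, (k ∈ U ∧ k ∉ T) ∧ ∀ i < k, (i ∈ T ↔ i ∈ U) := by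
    intro T U hTS hUS hAeq hne
    have hyT : ∀ j ∈ T, 1 ≤ y j := by
      intro j hj
      have := hTS hj
      rw [hS, Finset.mem_filter] at this
      omega
    set z : Fin n → ℕ :=
      fun j => y j - (if j ∈ T then 1 else 0) + (if j ∈ U then 1 else 0) with hzdef
    have hcast : (fun j => (z j : ℤ)) =
        (fun j => (y j : ℤ)) + (fun j => if j ∈ U then (1:ℤ) else 0)
          - (fun j => if j ∈ T then (1:ℤ) else 0) := by
      funext j
      simp only [hzdef, Pi.add_apply, Pi.sub_apply]
      by_cases hjT : j ∈ T
      · have := hyT j hjT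
        by_cases hjU : j ∈ U <;> simp only [hjT, hjU, if_true, if_false] <;> omega
      · by_cases hjU : j ∈ U <;> simp only [hjT, hjU, if_true, if_false] <;> omega
    have hz : A.mulVec (fun j => (z j : ℤ)) = b := by
      rw [hcast, Matrix.mulVec_sub, Matrix.mulVec_add, hAeq, hy, add_sub_cancel_right]
    have hzne : z ≠ y := by
      intro h
      apply hne
      ext j
      have hzj : z j = y j := congrFun h j
      constructor
      · intro hjT
        by_contra hjU
        have := hyT j hjT
        simp only [hzdef, hjT, hjU, if_true, if_false] at hzj
        omega
      · intro hjU
        by_contra hjT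
        simp only [hzdef, hjT, hjU, if_true, if_false] at hzj
        omega
    obtain ⟨k, hk1, hk2⟩ := hmin z hz hzne
    refine ⟨k, ?_, ?_⟩
    · by_cases hkT : k ∈ T
      · have := hyT k hkT
        by_cases hkU : k ∈ U <;>
          simp only [hzdef, hkT, hkU, if_true, if_false] at hk1 <;> omega
      · by_cases hkU : k ∈ U
        · exact ⟨hkU, hkT⟩
        · simp only [hzdef, hkT, hkU, if_false] at hk1
          omega
    · intro i hi
      have hik := hk2 i hi
      by_cases hiT : i ∈ T
      · have := hyT i hiT
        by_cases hiU : i ∈ U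
        · exact ⟨fun _ => hiU, fun _ => hiT⟩
        · simp only [hzdef, hiT, hiU, if_true, if_false] at hik
          omega
      · by_cases hiU : i ∈ U
        · simp only [hzdef, hiT, hiU, if_true, if_false] at hik
          omega
        · exact ⟨fun h => absurd h hiT, fun h => absurd h hiU⟩
  obtain ⟨k₁, ⟨hk₁U, hk₁T⟩, hagr₁⟩ := main T U hT hU heq hTU
  obtain ⟨k₂, ⟨hk₂T, hk₂U⟩, hagr₂⟩ := main U T hU hT heq.symm hTU.symm
  rcases lt_trichotomy k₁ k₂ with h | h | h
  · have := hagr₂ k₁ h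
    tauto
  · subst h
    exact hk₁T hk₂T
  · have := hagr₁ k₂ h
    tauto
end
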